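/- Let X ∈ R^{n×n} be symmetric. Fix nonnegative U₀ ∈ R^{n×r} and suppose λ > (1/2)(‖X‖₂ + ‖X − U₀U₀ᵀ‖_F − σ_n(X)). If a sequence (U_k, V_k) with (U₀, V₀ = U₀) satisfies g(U_k, V_k) ≤ g(U₀, V₀) for all k (where g(U,V) = (1/2)‖X − UVᵀ‖_F² + (λ/2)‖U − V‖_F²), converges to (U*, V*), and (U*, V*) is a critical point of the constrained penalized problem, then U* = V* and U* is a critical point of min_{U ≥ 0}(1/2)‖X − UUᵀ‖_F². -/
import Mathlib


open Matrix BigOperators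

/-- Frobenius norm of a real matrix. -/
noncomputable def frob {n m : ℕ} (A : Matrix (Fin n) (Fin m) ℝ) : ℝ :=
  Real.sqrt (∑ i, ∑ j, (A i j)^2)

/-- Spectral (ℓ2 operator) norm of a square real matrix. -/
noncomputable def specNorm {n : ℕ} (A : Matrix (Fin n) (Fin n) ℝ) : ℝ :=
  ‖(Matrix.toEuclideanCLM (𝕜 := ℝ) A : EuclideanSpace ℝ (Fin n) →L[ℝ] EuclideanSpace ℝ (Fin n))‖

/-- Trace inner product ⟨A, B⟩ = trace(Aᵀ B). -/
noncomputable def inprod {n m : ℕ} (A B : Matrix (Fin n) (Fin m) ℝ) : ℝ :=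
  (Aᵀ * B).trace

/-- The penalized nonsymmetric NMF objective. -/
noncomputable def gobj {n r : ℕ} (X : Matrix (Fin n) (Fin n) ℝ) (lam : ℝ)
    (U V : Matrix (Fin n) (Fin r) ℝ) : ℝ :=
  (1/2) * frob (X - U * Vᵀ) ^ 2 + (lam/2) * frob (U - V) ^ 2

/-! ### Auxiliary lemmas -/

lemma frob_nonneg {n m : ℕ} (A : Matrix (Fin n) (Fin m) ℝ) : 0 ≤ frob A := Real.sqrt_nonneg _

lemma frob_sq {n m : ℕ} (A : Matrix (Fin n) (Fin m) ℝ) : frob A ^ 2 = ∑ i, ∑ j, (A i j)^2 :=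
  Real.sq_sqrt (by positivity)

lemma frob_neg {n m : ℕ} (A : Matrix (Fin n) (Fin m) ℝ) : frob (-A) = frob A := by
  unfold frob; congr 1; simp

lemma inprod_eq {n m : ℕ} (A B : Matrix (Fin n) (Fin m) ℝ) :
    inprod A B = ∑ i, ∑ j, A i j * B i j := by
  unfold inprod
  simp only [Matrix.trace, Matrix.diag, Matrix.mul_apply, Matrix.transpose_apply]
  exact Finset.sum_comm

lemma inprod_self {n m : ℕ} (A : Matrix (Fin n) (Fin m) ℝ) : inprod A A = frob A ^ 2 := by
  rw [inprod_eq, frob_sq]; congr 1; ext i; congr 1; ext j; ring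

lemma inprod_add_left {n m : ℕ} (A B C : Matrix (Fin n) (Fin m) ℝ) :
    inprod (A + B) C = inprod A C + inprod B C := by
  simp [inprod, Matrix.transpose_add, Matrix.add_mul]

lemma inprod_sub_left {n m : ℕ} (A B C : Matrix (Fin n) (Fin m) ℝ) :
    inprod (A - B) C = inprod A C - inprod B C := by
  simp [inprod, Matrix.transpose_sub, Matrix.sub_mul]

lemma inprod_smul_left {n m : ℕ} (c : ℝ) (A B : Matrix (Fin n) (Fin m) ℝ) :
    inprod (c • A) B = c * inprod A B := by
  simp [inprod, Matrix.transpose_smul, Matrix.smul_mul]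

lemma inprod_zero_left {n m : ℕ} (B : Matrix (Fin n) (Fin m) ℝ) : inprod 0 B = 0 := by
  simp [inprod]

lemma trace_transpose_mul_self_nonneg {n m : ℕ} (A : Matrix (Fin n) (Fin m) ℝ) :
    0 ≤ (Aᵀ * A).trace := by
  simp only [Matrix.trace, Matrix.diag, Matrix.mul_apply, Matrix.transpose_apply]
  exact Finset.sum_nonneg fun j _ => Finset.sum_nonneg fun i _ => mul_self_nonneg _

/-- Cauchy–Schwarz for the trace inner product. -/
lemma inprod_le {n m : ℕ} (A B : Matrix (Fin n) (Fin m) ℝ) :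
    inprod A B ≤ frob A * frob B := by
  have h := Finset.sum_mul_sq_le_sq_mul_sq Finset.univ
    (fun p : Fin n × Fin m => A p.1 p.2) (fun p : Fin n × Fin m => B p.1 p.2)
  have ha : frob A ^ 2 = ∑ p : Fin n × Fin m, A p.1 p.2 ^ 2 := by
    rw [frob_sq, ← Finset.sum_product', Finset.univ_product_univ]
  have hb : frob B ^ 2 = ∑ p : Fin n × Fin m, B p.1 p.2 ^ 2 := by
    rw [frob_sq, ← Finset.sum_product', Finset.univ_product_univ]
  have hip : inprod A B = ∑ p : Fin n × Fin m, A p.1 p.2 * B p.1 p.2 := by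
    rw [inprod_eq, ← Finset.sum_product', Finset.univ_product_univ]
  rw [← ha, ← hb] at h
  nlinarith [frob_nonneg A, frob_nonneg B, mul_nonneg (frob_nonneg A) (frob_nonneg B)]

/-- Submultiplicativity of the Frobenius norm. -/
lemma frob_mul_le {n m r : ℕ} (A : Matrix (Fin n) (Fin m) ℝ) (B : Matrix (Fin m) (Fin r) ℝ) :
    frob (A * B) ≤ frob A * frob B := by
  have key : frob (A * B) ^ 2 ≤ frob A ^ 2 * frob B ^ 2 := by
    rw [frob_sq, frob_sq, frob_sq]
    calc ∑ i, ∑ j, ((A * B) i j) ^ 2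
        ≤ ∑ i, ∑ j, (∑ k, (A i k)^2) * (∑ k, (B k j)^2) := by
          apply Finset.sum_le_sum; intro i _
          apply Finset.sum_le_sum; intro j _
          simpa [Matrix.mul_apply] using
            Finset.sum_mul_sq_le_sq_mul_sq Finset.univ (fun k => A i k) (fun k => B k j)
      _ = (∑ i, ∑ k, (A i k)^2) * (∑ k, ∑ j, (B k j)^2) := by
          rw [Finset.sum_mul]
          apply Finset.sum_congr rfl; intro i _
          rw [← Finset.mul_sum, Finset.sum_comm]
  nlinarith [frob_nonneg (A * B), frob_nonneg A, frob_nonneg B,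
    mul_nonneg (frob_nonneg A) (frob_nonneg B)]

/-- Every eigenvalue of a symmetric matrix is bounded by the spectral norm. -/
lemma eig_le_specNorm {n : ℕ} [NeZero n] (X : Matrix (Fin n) (Fin n) ℝ) (hX : X.IsHermitian)
    (i : Fin n) : hX.eigenvalues i ≤ specNorm X := by
  set v : EuclideanSpace ℝ (Fin n) := hX.eigenvectorBasis i with hv
  have hvnorm : ‖v‖ = 1 := hX.eigenvectorBasis.orthonormal.1 i
  have happ : (Matrix.toEuclideanCLM (𝕜 := ℝ) X) v = hX.eigenvalues i • v := by
    have h1 := hX.mulVec_eigenvectorBasis i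
    have h2 : (Matrix.toEuclideanCLM (𝕜 := ℝ) X) v = Matrix.toEuclideanLin X v := by
      rw [← Matrix.coe_toEuclideanCLM_eq_toEuclideanLin]; rfl
    rw [h2, Matrix.toEuclideanLin_apply]
    ext j
    have := congrFun h1 j
    simpa using this
  have hle := (Matrix.toEuclideanCLM (𝕜 := ℝ) X).le_opNorm v
  rw [happ, norm_smul, hvnorm, Real.norm_eq_abs] at hle
  simp only [mul_one] at hle
  calc hX.eigenvalues i ≤ |hX.eigenvalues i| := le_abs_self _
    _ ≤ specNorm X := hle

/-- The objective `gobj` is jointly continuous. -/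
lemma gobj_continuous {n r : ℕ} (X : Matrix (Fin n) (Fin n) ℝ) (lam : ℝ) :
    Continuous (fun p : Matrix (Fin n) (Fin r) ℝ × Matrix (Fin n) (Fin r) ℝ =>
      gobj X lam p.1 p.2) := by
  have hrw : (fun p : Matrix (Fin n) (Fin r) ℝ × Matrix (Fin n) (Fin r) ℝ =>
      gobj X lam p.1 p.2) = fun p =>
      (1/2) * (∑ i, ∑ j, ((X - p.1 * p.2ᵀ) i j)^2)
        + (lam/2) * (∑ i, ∑ j, ((p.1 - p.2) i j)^2) := by
    funext p; rw [gobj, frob_sq, frob_sq]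
  rw [hrw]
  have hm : Continuous fun p : Matrix (Fin n) (Fin r) ℝ × Matrix (Fin n) (Fin r) ℝ =>
      X - p.1 * p.2ᵀ :=
    continuous_const.sub (continuous_fst.matrix_mul continuous_snd.matrix_transpose)
  have hs : Continuous fun p : Matrix (Fin n) (Fin r) ℝ × Matrix (Fin n) (Fin r) ℝ =>
      p.1 - p.2 := continuous_fst.sub continuous_snd
  apply Continuous.add
  · apply continuous_const.mul
    apply continuous_finset_sum; intro i _
    apply continuous_finset_sum; intro j _
    exact (((continuous_apply j).comp ((continuous_apply i).comp hm))).pow 2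
  · apply continuous_const.mul
    apply continuous_finset_sum; intro i _
    apply continuous_finset_sum; intro j _
    exact (((continuous_apply j).comp ((continuous_apply i).comp hs))).pow 2

set_option maxHeartbeats 2000000 in
theorem descent_convergent_algorithm_solves_symNMF {n r : ℕ} [NeZero n]
    (X : Matrix (Fin n) (Fin n) ℝ) (hX : X.IsHermitian)
    (U₀ : Matrix (Fin n) (Fin r) ℝ) (hU₀ : ∀ i j, 0 ≤ U₀ i j)
    (lam : ℝ)
    (hlam : lam > (1/2) * (specNorm X + frob (X - U₀ * U₀ᵀ) - ⨅ i, hX.eigenvalues i))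
    (U V : ℕ → Matrix (Fin n) (Fin r) ℝ)
    (hinit : U 0 = U₀ ∧ V 0 = U₀)
    (hdec : ∀ k, gobj X lam (U k) (V k) ≤ gobj X lam (U 0) (V 0))
    (Ustar Vstar : Matrix (Fin n) (Fin r) ℝ)
    (hconv : Filter.Tendsto (fun k => (U k, V k)) Filter.atTop (nhds (Ustar, Vstar)))
    (hUstar : ∀ i j, 0 ≤ Ustar i j) (hVstar : ∀ i j, 0 ≤ Vstar i j)
    (G H : Matrix (Fin n) (Fin r) ℝ)
    (hGU : ∀ i j, G i j * Ustar i j = 0) (hGnp : ∀ i j, G i j ≤ 0)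
    (hHV : ∀ i j, H i j * Vstar i j = 0) (hHnp : ∀ i j, H i j ≤ 0)
    (heq1 : (Ustar * Vstarᵀ - X) * Vstar + lam • (Ustar - Vstar) + G = 0)
    (heq2 : (Ustar * Vstarᵀ - X)ᵀ * Ustar - lam • (Ustar - Vstar) + H = 0) :
    Ustar = Vstar ∧ ∃ G' : Matrix (Fin n) (Fin r) ℝ,
      (∀ i j, G' i j * Ustar i j = 0) ∧ (∀ i j, G' i j ≤ 0) ∧
      (Ustar * Ustarᵀ - X) * Ustar + G' = 0 := by
  obtain ⟨hU0, hV0⟩ := hinit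
  set D : Matrix (Fin n) (Fin r) ℝ := Ustar - Vstar with hD
  set M : Matrix (Fin n) (Fin n) ℝ := Ustar * Vstarᵀ - X with hM
  set K : Matrix (Fin n) (Fin n) ℝ := Vstar * Ustarᵀ - Ustar * Vstarᵀ with hK
  have hXt : Xᵀ = X := by
    ext i j
    have h := congrFun (congrFun hX.eq i) j
    simpa using h
  -- spectral bound on the smallest eigenvalue
  have hσ : (⨅ i, hX.eigenvalues i) ≤ specNorm X := by
    obtain ⟨i0⟩ : Nonempty (Fin n) := inferInstance
    exact le_trans (ciInf_le (Finite.bddBelow_range _) i0) (eig_le_specNorm X hX i0)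
  have hF : 0 ≤ frob (X - U₀ * U₀ᵀ) := frob_nonneg _
  have hlam0 : 0 < lam := lt_of_le_of_lt (by linarith) hlam
  -- limit of the descent property
  have h1c : Filter.Tendsto (fun p : Matrix (Fin n) (Fin r) ℝ × Matrix (Fin n) (Fin r) ℝ =>
      gobj X lam p.1 p.2) (nhds (Ustar, Vstar)) (nhds (gobj X lam Ustar Vstar)) :=
    (gobj_continuous X lam).tendsto (Ustar, Vstar)
  have h2c : Filter.Tendsto ((fun p : Matrix (Fin n) (Fin r) ℝ × Matrix (Fin n) (Fin r) ℝ =>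
      gobj X lam p.1 p.2) ∘ fun k => (U k, V k)) Filter.atTop
      (nhds (gobj X lam Ustar Vstar)) := h1c.comp hconv
  have hlim : Filter.Tendsto (fun k => gobj X lam (U k) (V k)) Filter.atTop
      (nhds (gobj X lam Ustar Vstar)) := by
    refine h2c.congr fun k => ?_
    rfl
  have hgle : gobj X lam Ustar Vstar ≤ gobj X lam U₀ U₀ :=
    le_of_tendsto hlim (Filter.Eventually.of_forall fun k => by
      simpa [hU0, hV0] using hdec k)
  have hfz : frob (U₀ - U₀) = 0 := by simp [frob]
  have hgU0 : gobj X lam U₀ U₀ = (1/2) * frob (X - U₀ * U₀ᵀ) ^ 2 := by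
    rw [gobj, hfz]; ring
  have hMfrob : frob M = frob (X - Ustar * Vstarᵀ) := by
    rw [← frob_neg (X - Ustar * Vstarᵀ), neg_sub, hM]
  have hgU : gobj X lam Ustar Vstar
      = (1/2) * frob M ^ 2 + (lam/2) * frob D ^ 2 := by
    rw [gobj, hMfrob, hD]
  have hMF : frob M ≤ frob (X - U₀ * U₀ᵀ) := by
    nlinarith [frob_nonneg M, sq_nonneg (frob D), hgle.trans_eq hgU0, hgU,
      sq_nonneg (frob D)]
  -- scalar consequences of criticality
  have hGD : 0 ≤ inprod G D := by
    rw [inprod_eq]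
    refine Finset.sum_nonneg fun i _ => Finset.sum_nonneg fun j _ => ?_
    have h1 := hGU i j; have h2 := hGnp i j; have h3 := hVstar i j
    have h4 : D i j = Ustar i j - Vstar i j := by rw [hD]; simp [Matrix.sub_apply]
    nlinarith
  have hHD : inprod H D ≤ 0 := by
    rw [inprod_eq]
    refine Finset.sum_nonpos fun i _ => Finset.sum_nonpos fun j _ => ?_
    have h1 := hHV i j; have h2 := hHnp i j; have h3 := hUstar i j
    have h4 : D i j = Ustar i j - Vstar i j := by rw [hD]; simp [Matrix.sub_apply]
    nlinarith
  have key1 : inprod (M * Vstar) D + lam * frob D ^ 2 + inprod G D = 0 := by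
    have h0 : inprod (M * Vstar + lam • D + G) D = 0 := by
      rw [heq1]; exact inprod_zero_left _
    rw [inprod_add_left, inprod_add_left, inprod_smul_left, inprod_self] at h0
    linarith
  have key2 : inprod (Mᵀ * Ustar) D - lam * frob D ^ 2 + inprod H D = 0 := by
    have h0 : inprod (Mᵀ * Ustar - lam • D + H) D = 0 := by
      rw [heq2]; exact inprod_zero_left _
    rw [inprod_add_left, inprod_sub_left, inprod_smul_left, inprod_self] at h0
    linarith
  -- matrix identities
  have hKt : Kᵀ = -K := by
    rw [hK]; simp [Matrix.transpose_sub, Matrix.transpose_mul]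
  have hMt : Mᵀ = Vstar * Ustarᵀ - X := by
    rw [hM]; simp [Matrix.transpose_sub, Matrix.transpose_mul, hXt]
  have hid : Mᵀ * Ustar - M * Vstar = K * Ustar + M * D := by
    rw [hMt, hM, hK, hD]
    simp only [Matrix.sub_mul, Matrix.mul_sub]
    abel
  -- the antisymmetric part contributes non-positively
  have hE : inprod (K * Ustar) D ≤ 0 := by
    have e0 : inprod (K * Ustar) D = ((Ustarᵀ * Kᵀ) * D).trace := by
      rw [inprod, Matrix.transpose_mul]
    have e1 : ((Ustarᵀ * Kᵀ) * D).trace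
        = -(Ustarᵀ * (K * Ustar)).trace + (Ustarᵀ * (K * Vstar)).trace := by
      rw [hKt, hD]
      simp only [Matrix.mul_neg, Matrix.neg_mul, Matrix.mul_sub, Matrix.trace_neg,
        Matrix.trace_sub, Matrix.mul_assoc]
      ring
    have tzero : (Ustarᵀ * (K * Ustar)).trace = 0 := by
      have ht := Matrix.trace_transpose (Ustarᵀ * (K * Ustar))
      have h2 : (Ustarᵀ * (K * Ustar))ᵀ = -(Ustarᵀ * (K * Ustar)) := by
        simp [Matrix.transpose_mul, hKt, Matrix.mul_assoc]
      rw [h2, Matrix.trace_neg] at ht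
      linarith
    have c1 : (K * (Ustar * Vstarᵀ)).trace = -((K * (Vstar * Ustarᵀ)).trace) := by
      have h := Matrix.trace_transpose (K * (Ustar * Vstarᵀ))
      have h2 : (K * (Ustar * Vstarᵀ))ᵀ = -((Vstar * Ustarᵀ) * K) := by
        simp [Matrix.transpose_mul, hKt, Matrix.mul_assoc]
      rw [h2, Matrix.trace_neg, Matrix.trace_mul_comm] at h
      linarith
    have c2 : (K * K).trace
        = (K * (Vstar * Ustarᵀ)).trace - (K * (Ustar * Vstarᵀ)).trace := by
      have hKK : K * K = K * (Vstar * Ustarᵀ - Ustar * Vstarᵀ) :=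
        congrArg (fun Z => K * Z) hK
      rw [hKK, Matrix.mul_sub, Matrix.trace_sub]
    have c3 : (Ustarᵀ * (K * Vstar)).trace = (K * (Vstar * Ustarᵀ)).trace := by
      rw [Matrix.trace_mul_comm, Matrix.mul_assoc]
    have c4 : 0 ≤ (Kᵀ * K).trace := trace_transpose_mul_self_nonneg K
    have c5 : (Kᵀ * K).trace = -(K * K).trace := by
      rw [hKt, Matrix.neg_mul, Matrix.trace_neg]
    rw [e0, e1, tzero, c3]
    linarith
  -- the main chain of inequalities
  have hsplit : inprod (Mᵀ * Ustar) D - inprod (M * Vstar) D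
      = inprod (K * Ustar) D + inprod (M * D) D := by
    rw [← inprod_sub_left, hid, inprod_add_left]
  have hMD : inprod (M * D) D ≤ frob M * frob D ^ 2 := by
    calc inprod (M * D) D ≤ frob (M * D) * frob D := inprod_le _ _
      _ ≤ (frob M * frob D) * frob D :=
          mul_le_mul_of_nonneg_right (frob_mul_le M D) (frob_nonneg D)
      _ = frob M * frob D ^ 2 := by ring
  have hfinal : 2 * lam * frob D ^ 2 ≤ frob (X - U₀ * U₀ᵀ) * frob D ^ 2 := by
    have h1 : 2 * lam * frob D ^ 2
        ≤ inprod (K * Ustar) D + inprod (M * D) D := by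
      rw [← hsplit]; linarith
    have h2 : frob M * frob D ^ 2 ≤ frob (X - U₀ * U₀ᵀ) * frob D ^ 2 :=
      mul_le_mul_of_nonneg_right hMF (sq_nonneg _)
    linarith
  have h2lF : frob (X - U₀ * U₀ᵀ) < 2 * lam := by linarith
  have hd2 : frob D ^ 2 = 0 := by
    nlinarith [sq_nonneg (frob D)]
  -- conclude D = 0
  have hDzero : D = 0 := by
    have hsum : ∑ i, ∑ j, (D i j)^2 = 0 := by rw [← frob_sq]; exact hd2
    ext i j
    have h1 := (Finset.sum_eq_zero_iff_of_nonneg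
      (fun i _ => Finset.sum_nonneg fun j _ => sq_nonneg (D i j))).mp hsum i
      (Finset.mem_univ i)
    have h2 := (Finset.sum_eq_zero_iff_of_nonneg
      (fun j _ => sq_nonneg (D i j))).mp h1 j (Finset.mem_univ j)
    simpa using pow_eq_zero_iff two_ne_zero |>.mp h2
  have hUV : Ustar = Vstar := by
    have : Ustar - Vstar = 0 := by rw [← hD]; exact hDzero
    exact sub_eq_zero.mp this
  refine ⟨hUV, G, hGU, hGnp, ?_⟩
  have hfin := heq1
  rw [hDzero, smul_zero, add_zero, hM, ← hUV] at hfin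
  exact hfin
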